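/- arXiv:1610.04969 — 8 statements merged into one kernel-verified Lean document; each statement's English description precedes it below -/
import Mathlib

section
/- Let K ⊆ L ⊆ M be a tower of local fields with M/K finite Galois, L/K finite, G = Gal(M/K), H = Gal(M/L). Then for every w ∈ ℝ_{≥0}, G^w ∩ H ≤ H^w, where G^w and H^w are the upper-numbering ramification groups. -/
/-!
For subgroups `B ≤ A` of a finite group and a subgroup `H`, the map `(H ∩ A)/(H ∩ B) → A/B`
is injective, so `|B| / |A| ≤ |H ∩ B| / |H ∩ A|`. With `A = G₀`, `B = G_t` and `H_t = H ∩ G_t`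
this says that the integrand `1 / (G₀ : G_t)` of `φ_{M/K}` is at most that of `φ_{M/L}`, hence
`φ_{M/K} ≤ φ_{M/L}` on `[0, ∞)` and `ψ_{M/L}(u) ≤ ψ_{M/K}(u)`. As the lower filtration decreases,
`G^u ∩ H = G_{ψ_{M/K}(u)} ∩ H ⊆ H_{ψ_{M/L}(u)} = H^u`.
-/

/-- The positive generator of the value group of `w`. -/
noncomputable def vgap {Ω : Type*} [Field Ω] (w : Ω → WithTop ℝ) : ℝ :=
  sInf {r : ℝ | 0 < r ∧ ∃ x : Ω, w x = (r : WithTop ℝ)}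

/-- Lower-numbering ramification set `G_u` of `Gal(Ω/F)`. -/
def lowerRG (F : Type*) {Ω : Type*} [Field F] [Field Ω] [Algebra F Ω]
    (w : Ω → WithTop ℝ) (u : ℝ) : Set (Ω ≃ₐ[F] Ω) :=
  {σ | ∀ x : Ω, (0 : ℝ) ≤ w x → (((u + 1) * vgap w : ℝ) : WithTop ℝ) ≤ w (σ x - x)}

/-- Herbrand function `φ(u) = ∫₀ᵘ dt / (G₀ : G_t)`. -/
noncomputable def herbrand (F : Type*) {Ω : Type*} [Field F] [Field Ω] [Algebra F Ω]
    (w : Ω → WithTop ℝ) (u : ℝ) : ℝ :=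
  ∫ t in (0:ℝ)..u,
    (Nat.card (lowerRG F w t) : ℝ) / (Nat.card (lowerRG F w 0) : ℝ)

/-- Upper-numbering ramification set `G^v = G_{ψ(v)}`. -/
noncomputable def upperRG (F : Type*) {Ω : Type*} [Field F] [Field Ω] [Algebra F Ω]
    (w : Ω → WithTop ℝ) (v : ℝ) : Set (Ω ≃ₐ[F] Ω) :=
  lowerRG F w (sInf {u : ℝ | 0 ≤ u ∧ v ≤ herbrand F w u})

namespace Subgroup

variable {Γ Δ : Type*} [Group Γ] [Group Δ]

theorem card_mul_relIndex {A B : Subgroup Γ} (h : B ≤ A) :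
    Nat.card B * B.relIndex A = Nat.card A := by
  simpa using relIndex_mul_relIndex ⊥ B A bot_le h

theorem card_mul_card_comap_le [Finite Γ] (f : Δ →* Γ) {A B : Subgroup Γ} (hBA : B ≤ A) :
    Nat.card B * Nat.card (A.comap f) ≤ Nat.card (B.comap f) * Nat.card A := by
  have hle : (B.comap f).relIndex (A.comap f) ≤ B.relIndex A := by
    rw [relIndex_comap]
    exact relIndex_le_of_le_right (map_comap_le f A) index_ne_zero_of_finite
  calc Nat.card B * Nat.card (A.comap f)
      = Nat.card (B.comap f) * ((B.comap f).relIndex (A.comap f) * Nat.card B) := by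
        rw [← card_mul_relIndex (comap_mono hBA)]; ring
    _ ≤ Nat.card (B.comap f) * (B.relIndex A * Nat.card B) := by gcongr
    _ = Nat.card (B.comap f) * Nat.card A := by rw [← card_mul_relIndex hBA]; ring

end Subgroup

section LowerNumbering

variable (F : Type*) {M : Type*} [Field F] [Field M] [Algebra F M] (w : M → WithTop ℝ)

theorem lowerRG_antitone (hgap : 0 < vgap w) : Antitone (lowerRG F w) := by
  intro t u htu σ hσ x hx
  refine le_trans ?_ (hσ x hx)
  exact_mod_cast mul_le_mul_of_nonneg_right (by linarith) hgap.le

theorem one_mem_lowerRG (hw0 : w 0 = ⊤) (u : ℝ) : 1 ∈ lowerRG F w u := by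
  intro x _
  simp [hw0]

def lowerRGSubgroup (hw0 : w 0 = ⊤) (hw1 : w 1 = 0)
    (hmul : ∀ x y : M, w (x * y) = w x + w y)
    (hadd : ∀ x y : M, min (w x) (w y) ≤ w (x + y))
    (hGal : ∀ σ : M ≃ₐ[F] M, ∀ x : M, w (σ x) = w x) (u : ℝ) :
    Subgroup (M ≃ₐ[F] M) where
  carrier := lowerRG F w u
  one_mem' := one_mem_lowerRG F w hw0 u
  mul_mem' {σ τ} hσ hτ x hx := by
    have hτx : (0 : ℝ) ≤ w (τ x) := hGal τ x ▸ hx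
    have hsplit : (σ * τ) x - x = (σ (τ x) - τ x) + (τ x - x) := by
      rw [AlgEquiv.mul_apply]; ring
    rw [hsplit]
    exact (le_min (hσ (τ x) hτx) (hτ x hx)).trans (hadd _ _)
  inv_mem' {σ} hσ x hx := by
    let v := AddValuation.of w hw0 hw1 hadd hmul
    have hinv : σ (σ⁻¹ x - x) = x - σ x := by
      rw [map_sub, AlgEquiv.aut_inv, AlgEquiv.apply_symm_apply]
    have : w (σ⁻¹ x - x) = w (σ x - x) := by
      rw [← hGal σ, hinv]
      exact v.map_sub_swap x (σ x)
    exact this ▸ hσ x hx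

noncomputable def herbrandDensity (t : ℝ) : ℝ :=
  (Nat.card (lowerRG F w t) : ℝ) / Nat.card (lowerRG F w 0)

variable [Finite (M ≃ₐ[F] M)]

theorem herbrandDensity_antitone (hgap : 0 < vgap w) : Antitone (herbrandDensity F w) := by
  intro s t hst
  unfold herbrandDensity
  gcongr
  exact Nat.card_mono (Set.toFinite _) (lowerRG_antitone F w hgap hst)

theorem card_lowerRG_pos (hw0 : w 0 = ⊤) (u : ℝ) : 0 < Nat.card (lowerRG F w u) :=
  Nat.card_pos_iff.2 ⟨⟨_, one_mem_lowerRG F w hw0 u⟩, Subtype.finite⟩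

theorem exists_le_herbrand (hw0 : w 0 = ⊤) (hgap : 0 < vgap w) {v : ℝ} (hv : 0 ≤ v) :
    ∃ u, 0 ≤ u ∧ v ≤ herbrand F w u := by
  set c : ℝ := ((Nat.card (lowerRG F w 0) : ℕ) : ℝ)
  have hcard (t : ℝ) : 1 ≤ (Nat.card (lowerRG F w t) : ℝ) := by
    exact_mod_cast card_lowerRG_pos F w hw0 t
  have hc : 0 < c := zero_lt_one.trans_le (hcard 0)
  refine ⟨v * c, by positivity, ?_⟩
  calc v = ∫ _ in (0 : ℝ)..v * c, c⁻¹ := by simp [hc.ne']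
    _ ≤ herbrand F w (v * c) := by
      refine intervalIntegral.integral_mono_on (by positivity) intervalIntegrable_const
        (herbrandDensity_antitone F w hgap).intervalIntegrable fun t _ => ?_
      rw [inv_eq_one_div]
      gcongr
      exact hcard t

end LowerNumbering

section Tower

variable {K L M : Type*} [Field K] [Field L] [Field M]
    [Algebra K L] [Algebra L M] [Algebra K M] [IsScalarTower K L M]

theorem mem_lowerRG_iff_restrictScalars (w : M → WithTop ℝ) (t : ℝ) (σ : M ≃ₐ[L] M) :
    σ ∈ lowerRG L w t ↔ AlgEquiv.restrictScalars K σ ∈ lowerRG K w t :=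
  Iff.rfl

theorem herbrandDensity_le_herbrandDensity [Finite (M ≃ₐ[K] M)] (w : M → WithTop ℝ)
    (hw0 : w 0 = ⊤) (hw1 : w 1 = 0)
    (hmul : ∀ x y : M, w (x * y) = w x + w y)
    (hadd : ∀ x y : M, min (w x) (w y) ≤ w (x + y))
    (hGal : ∀ σ : M ≃ₐ[K] M, ∀ x : M, w (σ x) = w x) (hgap : 0 < vgap w) {t : ℝ} (ht : 0 ≤ t) :
    herbrandDensity K w t ≤ herbrandDensity L w t := by
  have : Finite (M ≃ₐ[L] M) := Finite.of_injective _ (AlgEquiv.restrictScalarsHom_injective K)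
  let G := lowerRGSubgroup K w hw0 hw1 hmul hadd hGal
  -- `lowerRG L w s` is definitionally the preimage `(G s).comap (restrictScalarsHom K)`.
  have key := Subgroup.card_mul_card_comap_le (AlgEquiv.restrictScalarsHom K (S := L) (A := M))
    (A := G 0) (B := G t) (lowerRG_antitone K w hgap ht)
  unfold herbrandDensity
  rw [div_le_div_iff₀ (by exact_mod_cast card_lowerRG_pos K w hw0 0)
    (by exact_mod_cast card_lowerRG_pos L w hw0 0)]
  exact_mod_cast key

theorem herbrand_le_herbrand [Finite (M ≃ₐ[K] M)] (w : M → WithTop ℝ)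
    (hw0 : w 0 = ⊤) (hw1 : w 1 = 0)
    (hmul : ∀ x y : M, w (x * y) = w x + w y)
    (hadd : ∀ x y : M, min (w x) (w y) ≤ w (x + y))
    (hGal : ∀ σ : M ≃ₐ[K] M, ∀ x : M, w (σ x) = w x) (hgap : 0 < vgap w) {u : ℝ} (hu : 0 ≤ u) :
    herbrand K w u ≤ herbrand L w u := by
  have : Finite (M ≃ₐ[L] M) := Finite.of_injective _ (AlgEquiv.restrictScalarsHom_injective K)
  exact intervalIntegral.integral_mono_on hu
    (herbrandDensity_antitone K w hgap).intervalIntegrable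
    (herbrandDensity_antitone L w hgap).intervalIntegrable
    fun t ht => herbrandDensity_le_herbrandDensity w hw0 hw1 hmul hadd hGal hgap ht.1

end Tower

theorem upper_numbering_subgroup_compat_general
    {K L M : Type*} [Field K] [Field L] [Field M]
    [Algebra K L] [Algebra L M] [Algebra K M] [IsScalarTower K L M]
    [FiniteDimensional K M]
    (w : M → WithTop ℝ)
    (hw0 : w 0 = ⊤) (hw1 : w 1 = 0)
    (hmul : ∀ x y : M, w (x * y) = w x + w y)
    (hadd : ∀ x y : M, min (w x) (w y) ≤ w (x + y))
    (hgap : 0 < vgap w)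
    (hGal : ∀ σ : M ≃ₐ[K] M, ∀ x : M, w (σ x) = w x) :
    ∀ u : ℝ, 0 ≤ u → ∀ σ : M ≃ₐ[L] M,
      (AlgEquiv.restrictScalars (R := K) σ) ∈ upperRG K w u →
      σ ∈ upperRG L w u := by
  intro u hu σ hσ
  have hψ : sInf {t | 0 ≤ t ∧ u ≤ herbrand L w t} ≤ sInf {t | 0 ≤ t ∧ u ≤ herbrand K w t} :=
    csInf_le_csInf ⟨0, fun _ ht => ht.1⟩ (exists_le_herbrand K w hw0 hgap hu)
      fun t ⟨ht, hut⟩ => ⟨ht, hut.trans (herbrand_le_herbrand w hw0 hw1 hmul hadd hGal hgap ht)⟩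
  exact (mem_lowerRG_iff_restrictScalars w _ σ).2 (lowerRG_antitone K w hgap hψ hσ)

/-- Let `K ⊆ L ⊆ M` be a tower of local fields with `M/K` finite Galois and
`G = Gal(M/K)`, `H = Gal(M/L)`.  Then `G^w ∩ H ≤ H^w` for every `w ≥ 0`. -/
theorem upper_numbering_subgroup_compat
    {K L M : Type*} [Field K] [Field L] [Field M]
    [Algebra K L] [Algebra L M] [Algebra K M] [IsScalarTower K L M]
    [FiniteDimensional K M] [IsGalois K M]
    (w : M → WithTop ℝ)
    (hw0 : w 0 = ⊤) (hw1 : w 1 = 0)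
    (hmul : ∀ x y : M, w (x * y) = w x + w y)
    (hadd : ∀ x y : M, min (w x) (w y) ≤ w (x + y))
    (hdisc : ∀ x : M, x ≠ 0 → ∃ n : ℤ, w x = ((n : ℝ) * vgap w : ℝ))
    (hgap : 0 < vgap w)
    (hGal : ∀ σ : M ≃ₐ[K] M, ∀ x : M, w (σ x) = w x) :
    ∀ u : ℝ, 0 ≤ u → ∀ σ : M ≃ₐ[L] M,
      (AlgEquiv.restrictScalars (R := K) σ) ∈ upperRG K w u →
      σ ∈ upperRG L w u :=
  upper_numbering_subgroup_compat_general w hw0 hw1 hmul hadd hgap hGal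
end

section
/- Let f(z) = z^k - c with k > 2 and c ∈ ℝ^×. Then the field generated over ℝ by all iterated preimages of any a ∈ ℝ under f (i.e., all complex solutions of f^n(z) = a for all n) is ℂ. -/
open Complex

/-- For `f z = z ^ k - c` with `k > 2` and `c` a nonzero real, and any `a ∈ ℝ`,
the field generated over `ℝ` by all iterated preimages of `a` (i.e. all complex
solutions of `f^n(z) = a` for all `n ≥ 1`) is all of `ℂ`. -/
theorem real_case_k_gt_two
    (k : ℕ) (hk : 2 < k) (c : ℝ) (hc : c ≠ 0) (a : ℝ) :
    IntermediateField.adjoin ℝ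
      {z : ℂ | ∃ n : ℕ, 1 ≤ n ∧ (fun w : ℂ => w ^ k - (c : ℂ))^[n] z = (a : ℂ)} = ⊤ := by
  have hk0 : 0 < k := by omega
  have hkC : (k : ℂ) ≠ 0 := Nat.cast_ne_zero.mpr (by omega)
  have hcC : (c : ℂ) ≠ 0 := by exact_mod_cast hc
  set ζ : ℂ := Complex.exp (((2 * Real.pi / k : ℝ) : ℂ) * Complex.I) with hζdef
  have hζim : ζ.im = Real.sin (2 * Real.pi / k) := Complex.exp_ofReal_mul_I_im _
  have hsin : 0 < Real.sin (2 * Real.pi / k) := by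
    apply Real.sin_pos_of_pos_of_lt_pi
    · positivity
    · rw [div_lt_iff₀ (by positivity)]
      have : (2 : ℝ) < k := by exact_mod_cast hk
      nlinarith [Real.pi_pos]
  have hζim0 : ζ.im ≠ 0 := by rw [hζim]; exact ne_of_gt hsin
  have hζk : ζ ^ k = 1 := by
    rw [hζdef, ← Complex.exp_nat_mul]
    have : (k : ℂ) * (((2 * Real.pi / k : ℝ) : ℂ) * Complex.I)
        = 2 * Real.pi * Complex.I := by
      push_cast
      field_simp
    rw [this, Complex.exp_two_pi_mul_I]
  have hζ1 : ζ ≠ 1 := by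
    intro h
    apply hζim0
    rw [h]
    simp
  -- find w with w ^ k = a + c and w ≠ -c
  obtain ⟨w, hw1, hw2⟩ : ∃ w : ℂ, w ^ k = (a : ℂ) + c ∧ w ≠ -(c : ℂ) := by
    obtain ⟨w₀, hw₀⟩ := Complex.isAlgClosed.exists_pow_nat_eq ((a : ℂ) + c) hk0
    by_cases h : w₀ = -(c : ℂ)
    · refine ⟨ζ * w₀, by rw [mul_pow, hζk, one_mul, hw₀], ?_⟩
      intro hcontra
      rw [h] at hcontra
      have h1 : ζ * (-(c : ℂ)) = 1 * (-(c : ℂ)) := by rw [one_mul]; exact hcontra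
      exact hζ1 (mul_right_cancel₀ (neg_ne_zero.mpr hcC) h1)
    · exact ⟨w₀, hw₀, h⟩
  have hwc : w + c ≠ 0 := fun h => hw2 (by linear_combination h)
  obtain ⟨β, hβ⟩ := Complex.isAlgClosed.exists_pow_nat_eq (w + c) hk0
  have hβ0 : β ≠ 0 := by
    intro h
    rw [h, zero_pow (by omega)] at hβ
    exact hwc hβ.symm
  set f : ℂ → ℂ := fun w : ℂ => w ^ k - (c : ℂ) with hfdef
  have hfβ : f^[2] β = (a : ℂ) := by
    show f (f β) = _
    simp only [hfdef]
    rw [hβ]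
    have : w + (c : ℂ) - c = w := by ring
    rw [this, hw1]
    ring
  have hfζβ : f^[2] (ζ * β) = (a : ℂ) := by
    show f (f (ζ * β)) = _
    simp only [hfdef]
    rw [mul_pow, hζk, one_mul, hβ]
    have : w + (c : ℂ) - c = w := by ring
    rw [this, hw1]
    ring
  set F := IntermediateField.adjoin ℝ
      {z : ℂ | ∃ n : ℕ, 1 ≤ n ∧ (fun w : ℂ => w ^ k - (c : ℂ))^[n] z = (a : ℂ)} with hF
  have hβF : β ∈ F := IntermediateField.subset_adjoin _ _ ⟨2, by omega, hfβ⟩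
  have hζβF : ζ * β ∈ F := IntermediateField.subset_adjoin _ _ ⟨2, by omega, hfζβ⟩
  have hζF : ζ ∈ F := by
    have : ζ = (ζ * β) / β := by field_simp
    rw [this]
    exact div_mem hζβF hβF
  have hre : ∀ r : ℝ, (r : ℂ) ∈ F := fun r => F.algebraMap_mem r
  have hIF : Complex.I ∈ F := by
    have hIeq : Complex.I = (ζ - (ζ.re : ℂ)) / ((ζ.im : ℂ)) := by
      have h1 : (ζ.re : ℂ) + ζ.im * Complex.I = ζ := Complex.re_add_im ζ
      have h2 : (ζ.im : ℂ) ≠ 0 := by exact_mod_cast hζim0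
      field_simp
      linear_combination h1
    rw [hIeq]
    exact div_mem (sub_mem hζF (hre _)) (hre _)
  rw [eq_top_iff]
  rintro z -
  rw [← Complex.re_add_im z]
  exact add_mem (hre _) (mul_mem (hre _) hIF)
end

section
/- Let f(z) = z² - c with c ∈ ℝ, c < 2 and c ≠ 0, and let a ∈ ℝ. Then not all iterated preimages of a under f are real; i.e., there exist n ≥ 1 and z ∈ ℂ \ ℝ with f^n(z) = a. -/
/-!
Work with the real map `g t = t² - c`. A real point `x < -c` has the two non-real preimages
`±i√(-(x + c))`, so it suffices to find a real iterated preimage of `a` below `-c`. If `a + c ≥ 0`,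
both `±√(a + c)` are real preimages of `a`. For `c < 0` the negative one already lies below `-c`.
For `0 < c < 2`, follow the positive branch `y ↦ √y + c` on `y = a + c`: as long as `y ≤ c²` it
raises `y` by at least `min c (c(2 - c)) > 0`, so eventually `y > c²`, i.e. `-√y < -c`.
-/

open Function

/-- With `t = √y ∈ [0, c]` this is `t + c - t² ≥ min c (c(2 - c))`: a concave function of `t`
attains its minimum at an endpoint. -/
lemma add_le_sqrt_add {c y : ℝ} (hc : 0 < c) (hy : 0 ≤ y) (hyc : y ≤ c ^ 2) :
    y + min c (c * (2 - c)) ≤ √y + c := by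
  set t := √y
  have ht : t ^ 2 = y := Real.sq_sqrt hy
  have ht0 : 0 ≤ t := Real.sqrt_nonneg y
  have htc : t ≤ c := by
    simpa [Real.sqrt_sq hc.le] using Real.sqrt_le_sqrt hyc
  rw [← ht]
  rcases le_total c 1 with hc1 | hc1
  · nlinarith [min_le_left c (c * (2 - c)), mul_nonneg ht0 (by linarith : 0 ≤ 1 - t)]
  · nlinarith [min_le_right c (c * (2 - c)), mul_nonneg (by linarith : 0 ≤ c - t)
      (by linarith : 0 ≤ t + c - 1)]

def HasIterPreimageLtNeg (c a : ℝ) : Prop :=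
  ∃ m : ℕ, ∃ x : ℝ, x + c < 0 ∧ (fun t : ℝ => t ^ 2 - c)^[m] x = a

namespace HasIterPreimageLtNeg

variable {c : ℝ}

lemma of_add_neg {a : ℝ} (ha : a + c < 0) : HasIterPreimageLtNeg c a :=
  ⟨0, a, ha, rfl⟩

lemma sq_sub {b : ℝ} (hb : HasIterPreimageLtNeg c b) : HasIterPreimageLtNeg c (b ^ 2 - c) := by
  obtain ⟨m, x, hx, hxb⟩ := hb
  exact ⟨m + 1, x, hx, by rw [iterate_succ_apply', hxb]⟩

lemma of_sqrt_add {a : ℝ} (ha : 0 ≤ a + c) (h : HasIterPreimageLtNeg c (√(a + c))) :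
    HasIterPreimageLtNeg c a := by
  simpa [Real.sq_sqrt ha] using h.sq_sub

lemma of_lt_sqrt {a : ℝ} (ha : 0 ≤ a + c) (h : c < √(a + c)) : HasIterPreimageLtNeg c a := by
  have := (of_add_neg (c := c) (a := -√(a + c)) (by linarith)).sq_sub
  simpa [Real.sq_sqrt ha] using this

lemma of_neg (hc : c < 0) (a : ℝ) : HasIterPreimageLtNeg c a := by
  rcases lt_or_ge (a + c) 0 with ha | ha
  · exact of_add_neg ha
  · exact of_lt_sqrt ha (hc.trans_le (Real.sqrt_nonneg _))

lemma of_pos_of_lt_two (hc0 : 0 < c) (hc2 : c < 2) (a : ℝ) : HasIterPreimageLtNeg c a := by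
  set δ := min c (c * (2 - c))
  have hδ : 0 < δ := lt_min hc0 (mul_pos hc0 (by linarith))
  -- induction on the number of steps `n` of size `δ` needed to push `a + c` above `c²`
  have key : ∀ n : ℕ, ∀ a, 0 ≤ a + c → c ^ 2 - (a + c) < n * δ → HasIterPreimageLtNeg c a := by
    intro n
    induction n with
    | zero =>
      intro a ha hn
      exact of_lt_sqrt ha ((Real.lt_sqrt hc0.le).mpr (by simpa using hn))
    | succ n ih =>
      intro a ha hn
      rcases lt_or_ge (c ^ 2) (a + c) with hac | hac
      · exact of_lt_sqrt ha ((Real.lt_sqrt hc0.le).mpr hac)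
      · refine of_sqrt_add ha (ih _ (by linarith [Real.sqrt_nonneg (a + c)]) ?_)
        push_cast at hn
        linarith [add_le_sqrt_add hc0 ha hac]
  rcases lt_or_ge (a + c) 0 with ha | ha
  · exact of_add_neg ha
  · obtain ⟨n, hn⟩ := exists_nat_gt ((c ^ 2 - (a + c)) / δ)
    exact key n a ha (by rwa [div_lt_iff₀ hδ] at hn)

end HasIterPreimageLtNeg

lemma exists_im_ne_zero_sq_sub_eq {c x : ℝ} (hx : x + c < 0) :
    ∃ z : ℂ, z.im ≠ 0 ∧ z ^ 2 - (c : ℂ) = x := by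
  have hpos : 0 < -(x + c) := by linarith
  refine ⟨Complex.I * (√(-(x + c)) : ℝ), by simpa using (Real.sqrt_pos.mpr hpos).ne', ?_⟩
  rw [mul_pow, Complex.I_sq, ← Complex.ofReal_pow, Real.sq_sqrt hpos.le]
  push_cast
  ring

lemma ofReal_iterate_sq_sub (c : ℝ) (m : ℕ) (x : ℝ) :
    (((fun t : ℝ => t ^ 2 - c)^[m] x : ℝ) : ℂ) = (fun w : ℂ => w ^ 2 - (c : ℂ))^[m] (x : ℂ) :=
  Semiconj.iterate_right (fun t => by push_cast; rfl) m x

/-- For `f z = z² - c` with `c` real, `c < 2`, `c ≠ 0`, and any `a ∈ ℝ`, not all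
iterated preimages of `a` under `f` are real: there exist `n ≥ 1` and a non-real
`z ∈ ℂ` with `f^n(z) = a`. -/
theorem real_case_c_lt_two
    (c : ℝ) (hc2 : c < 2) (hc0 : c ≠ 0) (a : ℝ) :
    ∃ n : ℕ, 1 ≤ n ∧ ∃ z : ℂ, z.im ≠ 0 ∧
      (fun w : ℂ => w ^ 2 - (c : ℂ))^[n] z = (a : ℂ) := by
  obtain ⟨m, x, hx, hxa⟩ : HasIterPreimageLtNeg c a := by
    rcases hc0.lt_or_gt with hc | hc
    · exact .of_neg hc a
    · exact .of_pos_of_lt_two hc hc2 a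
  obtain ⟨z, hz, hzx⟩ := exists_im_ne_zero_sq_sub_eq hx
  refine ⟨m + 1, le_add_self, z, hz, ?_⟩
  rw [iterate_succ_apply, hzx, ← ofReal_iterate_sq_sub, hxa]
end

section
/- Let f(z) = z² - c with c ∈ ℝ, c ≥ 2, and let a ∈ [-c, c² - c]. Then all iterated preimages of a under f are real: for every n ≥ 0, every complex solution z of f^n(z) = a lies in ℝ, and moreover lies in [-c, c² - c]. -/
/-- For `f z = z² - c` with `c ≥ 2` and `a ∈ [-c, c² - c]`, every iterated
preimage of `a` under `f` is real and lies in `[-c, c² - c]`. -/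
theorem real_case_c_ge_two_interval
    (c : ℝ) (hc : 2 ≤ c) (a : ℝ) (ha : a ∈ Set.Icc (-c) (c ^ 2 - c)) :
    ∀ n : ℕ, ∀ z : ℂ, (fun w : ℂ => w ^ 2 - (c : ℂ))^[n] z = (a : ℂ) →
      z.im = 0 ∧ z.re ∈ Set.Icc (-c) (c ^ 2 - c) := by
  intro n
  induction n with
  | zero =>
    intro z hz
    simp only [Function.iterate_zero, id_eq] at hz
    subst hz
    exact ⟨rfl, by simpa using ha⟩
  | succ n ih =>
    intro z hz
    rw [Function.iterate_succ_apply] at hz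
    obtain ⟨him, hre⟩ := ih _ hz
    simp only [Complex.sub_im, Complex.sq_norm, Complex.ofReal_im, Complex.sub_re,
      Complex.ofReal_re] at him hre
    have him2 : (z ^ 2).im = 2 * z.re * z.im := by
      simp [pow_two, Complex.mul_im]; ring
    have hre2 : (z ^ 2).re = z.re ^ 2 - z.im ^ 2 := by
      rw [pow_two, Complex.mul_re]; ring
    rw [him2, sub_zero] at him
    rw [hre2] at hre
    obtain ⟨h1, h2⟩ := hre
    have hzim : z.im = 0 := by
      rcases mul_eq_zero.mp him with h | h
      · rcases mul_eq_zero.mp h with h | h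
        · norm_num at h
        · -- z.re = 0
          nlinarith [sq_nonneg z.im]
      · exact h
    refine ⟨hzim, ?_, ?_⟩
    · nlinarith [sq_nonneg (z.re + c), sq_nonneg z.im]
    · nlinarith [sq_nonneg (z.re - c), sq_nonneg z.im]
end

section
/- Let f(z) = z² - c with c ∈ ℝ, c ≥ 2, and let a ∈ ℝ with a ∉ [-c, c² - c]. Then some iterated preimage of a under f is not real; i.e., there exist n ≥ 1 and z ∈ ℂ \ ℝ with f^n(z) = a. -/
/-- For `f z = z² - c` with `c ≥ 2` and `a ∈ ℝ` with `a ∉ [-c, c² - c]`, some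
iterated preimage of `a` under `f` is not real. -/
theorem real_case_c_ge_two_outside
    (c : ℝ) (hc : 2 ≤ c) (a : ℝ) (ha : a ∉ Set.Icc (-c) (c ^ 2 - c)) :
    ∃ n : ℕ, 1 ≤ n ∧ ∃ z : ℂ, z.im ≠ 0 ∧
      (fun w : ℂ => w ^ 2 - (c : ℂ))^[n] z = (a : ℂ) := by
  rw [Set.mem_Icc, not_and_or] at ha
  push_neg at ha
  rcases ha with h | h
  · -- a < -c
    have hpos : 0 < -(a + c) := by linarith
    set s := Real.sqrt (-(a + c)) with hs
    have hs0 : 0 < s := Real.sqrt_pos.mpr hpos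
    have hs2 : s ^ 2 = -(a + c) := Real.sq_sqrt hpos.le
    refine ⟨1, le_refl 1, Complex.I * (s : ℂ), ?_, ?_⟩
    · simp [Complex.mul_im, hs0.ne']
    · simp only [Function.iterate_one]
      have : (Complex.I * (s : ℂ)) ^ 2 = ((-(a + c) : ℝ) : ℂ) * (-1) := by
        rw [mul_pow, Complex.I_sq, ← Complex.ofReal_pow, hs2]
        ring
      rw [this]
      push_cast
      ring
  · -- a > c² - c
    have hac : c ^ 2 < a + c := by linarith
    have hc0 : (0:ℝ) < c := by linarith
    set s := Real.sqrt (a + c) with hsdef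
    have hs2 : s ^ 2 = a + c := Real.sq_sqrt (by nlinarith)
    have hsc : c < s := by
      nlinarith [Real.sqrt_nonneg (a + c)]
    have hpos : 0 < s - c := by linarith
    set t := Real.sqrt (s - c) with htdef
    have ht0 : 0 < t := Real.sqrt_pos.mpr hpos
    have ht2 : t ^ 2 = s - c := Real.sq_sqrt hpos.le
    refine ⟨2, by norm_num, Complex.I * (t : ℂ), ?_, ?_⟩
    · simp [Complex.mul_im, ht0.ne']
    · have step1 : (Complex.I * (t : ℂ)) ^ 2 - (c : ℂ) = ((-s : ℝ) : ℂ) := by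
        rw [mul_pow, Complex.I_sq, ← Complex.ofReal_pow, ht2]
        push_cast
        ring
      have step2 : ((-s : ℝ) : ℂ) ^ 2 - (c : ℂ) = (a : ℂ) := by
        rw [← Complex.ofReal_pow]
        have : (-s) ^ 2 = a + c := by rw [neg_pow]; simp [hs2]
        rw [this]
        push_cast
        ring
      show (fun w : ℂ => w ^ 2 - (c : ℂ))^[2] (Complex.I * (t : ℂ)) = (a : ℂ)
      rw [Function.iterate_succ_apply, Function.iterate_one]
      rw [step1, step2]
end

section
/- Let K be a field complete with respect to a discrete valuation v, let ℓ ≥ 2, c ∈ K^× with v(c) ≥ 0, a ∈ K, and f(z) = z^ℓ - c. If min{v(a), v(c)} ≠ 0 and v(a) ≠ v(c), then for any sequence (αₙ) with α₀ = a and α_{n+1}^ℓ = αₙ + c, one has v(αₙ) = min{v(a), v(c)}/ℓⁿ < v(c) for all n ≥ 1. In particular, the valuations v(αₙ) have denominators (powers of ℓ) tending to infinity. -/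
/-- Let `v` be an (additive, real-valued) valuation on a field `L` (the algebraic
closure of a complete discretely valued field `K`, with `v` extended to it), and
let `f z = z ^ ℓ - c` with `ℓ ≥ 2`, `v c ≥ 0`.  If `min (v a) (v c) ≠ 0` and
`v a ≠ v c`, then any sequence of iterated preimages `(αₙ)` of `a` satisfies
`v (α n) = min (v a) (v c) / ℓ ^ n < v c` for all `n ≥ 1`. -/
theorem infinitely_ramified_valuations
    {L : Type*} [Field L] (v : L → ℝ)
    (hmul : ∀ x y : L, x ≠ 0 → y ≠ 0 → v (x * y) = v x + v y)
    (hadd : ∀ x y : L, x ≠ 0 → y ≠ 0 → x + y ≠ 0 → min (v x) (v y) ≤ v (x + y))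
    (ℓ : ℕ) (hℓ : 2 ≤ ℓ) (c a : L) (hc : c ≠ 0) (ha : a ≠ 0)
    (hvc : 0 ≤ v c) (hmin : min (v a) (v c) ≠ 0) (hne : v a ≠ v c)
    (α : ℕ → L) (hα0 : α 0 = a)
    (hrec : ∀ n, (α (n + 1)) ^ ℓ = α n + c) :
    ∀ n, 1 ≤ n → v (α n) = min (v a) (v c) / ℓ ^ n ∧ v (α n) < v c := by
  have hv1 : v 1 = 0 := by
    have h := hmul 1 1 one_ne_zero one_ne_zero
    simp at h
    linarith
  have hvneg : ∀ x : L, x ≠ 0 → v (-x) = v x := by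
    intro x hx
    have hm1 : v (-1 : L) = 0 := by
      have h := hmul (-1) (-1) (by norm_num) (by norm_num)
      simp [hv1] at h
      linarith
    have h := hmul (-1) x (by norm_num) hx
    rw [neg_one_mul] at h
    rw [h, hm1]; ring
  have haddlt : ∀ x y : L, x ≠ 0 → y ≠ 0 → v x < v y → x + y ≠ 0 ∧ v (x + y) = v x := by
    intro x y hx hy hlt
    have hne0 : x + y ≠ 0 := by
      intro h
      have hxy : x = -y := by linear_combination h
      rw [hxy, hvneg y hy] at hlt
      exact lt_irrefl _ hlt
    refine ⟨hne0, ?_⟩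
    have h1 := hadd x y hx hy hne0
    rw [min_eq_left hlt.le] at h1
    have h2 := hadd (x + y) (-y) hne0 (neg_ne_zero.mpr hy) (by simpa using hx)
    rw [hvneg y hy] at h2
    have hxx : (x + y) + -y = x := by ring
    rw [hxx] at h2
    rcases min_cases (v (x + y)) (v y) with ⟨he, _⟩ | ⟨he, hlt2⟩ <;> rw [he] at h2 <;> linarith
  have hminadd : ∀ x y : L, x ≠ 0 → y ≠ 0 → v x ≠ v y →
      x + y ≠ 0 ∧ v (x + y) = min (v x) (v y) := by
    intro x y hx hy hne'
    rcases lt_or_gt_of_ne hne' with h | h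
    · obtain ⟨h0, he⟩ := haddlt x y hx hy h
      exact ⟨h0, by rw [he, min_eq_left h.le]⟩
    · obtain ⟨h0, he⟩ := haddlt y x hy hx h
      rw [add_comm] at h0 he
      exact ⟨h0, by rw [he, min_eq_right h.le]⟩
  have hpow : ∀ x : L, x ≠ 0 → ∀ k : ℕ, v (x ^ k) = k * v x := by
    intro x hx k
    induction k with
    | zero => simp [hv1]
    | succ k ih =>
      rw [pow_succ, hmul _ _ (pow_ne_zero _ hx) hx, ih]
      push_cast; ring
  have hℓ0 : (ℓ : ℝ) ≠ 0 := by positivity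
  have hstep : ∀ x x' : L, x ≠ 0 → v x ≠ v c → x' ^ ℓ = x + c →
      x' ≠ 0 ∧ v x' = min (v x) (v c) / ℓ := by
    intro x x' hx hnex hr
    obtain ⟨hne0, heq⟩ := hminadd x c hx hc hnex
    have hx' : x' ≠ 0 := by
      intro h
      rw [h, zero_pow (by omega : ℓ ≠ 0)] at hr
      exact hne0 hr.symm
    have hp := hpow x' hx' ℓ
    rw [hr, heq] at hp
    refine ⟨hx', ?_⟩
    field_simp
    linarith
  set m := min (v a) (v c) with hm
  have hmlec : m ≤ v c := min_le_right _ _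
  have hmlt : ∀ k : ℕ, 1 ≤ k → m / ℓ ^ k < v c := by
    intro k hk
    have hgt1 : (1 : ℝ) < (ℓ : ℝ) ^ k := by
      have : (1 : ℝ) < (ℓ : ℝ) := by exact_mod_cast (by omega : 1 < ℓ)
      exact one_lt_pow₀ this (by omega)
    rcases lt_or_gt_of_ne hmin with hneg | hpos
    · calc m / ℓ ^ k < 0 := div_neg_of_neg_of_pos hneg (by positivity)
        _ ≤ v c := hvc
    · calc m / ℓ ^ k < m := div_lt_self hpos hgt1
        _ ≤ v c := hmlec
  have key : ∀ n : ℕ, α (n + 1) ≠ 0 ∧ v (α (n + 1)) = m / ℓ ^ (n + 1) := by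
    intro n
    induction n with
    | zero =>
      obtain ⟨h0, he⟩ := hstep a (α 1) ha hne (by rw [← hα0]; exact hrec 0)
      exact ⟨h0, by rw [he]; rw [pow_one]⟩
    | succ n ih =>
      obtain ⟨h0, he⟩ := ih
      have hlt := hmlt (n + 1) (by omega)
      rw [← he] at hlt
      obtain ⟨h0', he'⟩ := hstep (α (n + 1)) (α (n + 2)) h0 (ne_of_lt hlt) (hrec (n + 1))
      refine ⟨h0', ?_⟩
      rw [he', min_eq_left (le_of_lt hlt), he]
      rw [div_div, ← pow_succ]
  intro n hn
  obtain ⟨k, rfl⟩ : ∃ k, n = k + 1 := ⟨n - 1, by omega⟩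
  obtain ⟨_, he⟩ := key k
  exact ⟨he, by rw [he]; exact hmlt (k + 1) (by omega)⟩
end

section
/- Let p be a prime, K a finite extension of ℚ_p with valuation v normalized so v(p) = 1, c ∈ K with -p/(p-1) < v(c) < 0, and f(z) = z^p - c. Suppose a ∈ K satisfies v(α) = v(c)/p for every iterated preimage α of a. Fix sequences (αₙ), (βₙ) of preimages with α₀ = β₀ = a, f(α_{n+1}) = αₙ, f(β_{n+1}) = βₙ, and β₁ ≠ α₁. Then v(βₙ - αₙ) = (v(c)/p + 1/(p-1)) / p^{n-1} for all n ≥ 1. -/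
/-!
Extend `v` by `v 0 = ⊤` to an additive valuation `w`. For `w u = t`, the expansion
`(1 + u) ^ p - 1 = p u + u ^ p + ∑_{1 < m < p} C(p, m) u ^ m` has its middle terms strictly above
`min (p t) (1 + t)` because `p ∣ C(p, m)`, so this minimum is the valuation of `(1 + u) ^ p - 1`
as soon as `p t ≠ 1 + t`. For `u = β₁ / α₁ - 1` we have `(1 + u) ^ p = 1`, which forces the
break point `t = 1 / (p - 1)` and gives the case `n = 1`. Afterwards
`βₙ - αₙ = βₙ₊₁ ^ p - αₙ₊₁ ^ p` has valuation at most `p v(αₙ₊₁) + p / (p - 1)`, which puts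
`u = βₙ₊₁ / αₙ₊₁ - 1` on the segment of slope `p` and divides the valuation by `p`.
-/

open Finset

theorem one_add_pow_sub_one_eq {R : Type*} [CommRing R] (u : R) {p : ℕ} (hp : 2 ≤ p) :
    (1 + u) ^ p - 1 = (p * u + u ^ p) + ∑ m ∈ Ico 2 p, u ^ m * (p.choose m : R) := by
  rw [add_comm 1 u, add_pow, sum_range_succ, range_eq_Ico,
    sum_eq_sum_Ico_succ_bot (by omega), sum_eq_sum_Ico_succ_bot (by omega)]
  simp only [pow_zero, tsub_zero, one_pow, mul_one, Nat.choose_zero_right, Nat.cast_one, zero_add,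
    pow_one, Nat.choose_one_right, tsub_self, Nat.choose_self]
  ring

namespace AddValuation

section Construction

variable {L : Type*} [Ring L] [NoZeroDivisors L] [Nontrivial L]

open scoped Classical in
noncomputable def ofNeZero (v : L → ℝ)
    (hmul : ∀ x y : L, x ≠ 0 → y ≠ 0 → v (x * y) = v x + v y)
    (hadd : ∀ x y : L, x ≠ 0 → y ≠ 0 → x + y ≠ 0 → min (v x) (v y) ≤ v (x + y)) :
    AddValuation L (WithTop ℝ) :=
  AddValuation.of (fun x => if x = 0 then ⊤ else (v x : WithTop ℝ)) (if_pos rfl)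
    (by
      have h := hmul 1 1 one_ne_zero one_ne_zero
      rw [mul_one] at h
      simp only [one_ne_zero, if_false, WithTop.coe_eq_zero]
      linarith)
    (fun x y => by
      by_cases hx : x = 0
      · simp [hx]
      by_cases hy : y = 0
      · simp [hy]
      by_cases hxy : x + y = 0
      · simp [hxy]
      simp only [hx, hy, hxy, if_false]
      exact_mod_cast hadd x y hx hy hxy)
    (fun x y => by
      by_cases hx : x = 0
      · simp [hx]
      by_cases hy : y = 0
      · simp [hy]
      simp only [hx, hy, mul_ne_zero hx hy, if_false]
      exact_mod_cast hmul x y hx hy)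

variable (v : L → ℝ) (hmul : ∀ x y : L, x ≠ 0 → y ≠ 0 → v (x * y) = v x + v y)
  (hadd : ∀ x y : L, x ≠ 0 → y ≠ 0 → x + y ≠ 0 → min (v x) (v y) ≤ v (x + y))

theorem ofNeZero_apply_of_ne_zero {x : L} (hx : x ≠ 0) : ofNeZero v hmul hadd x = v x :=
  if_neg hx

theorem ofNeZero_eq_coe_iff {x : L} {r : ℝ} : ofNeZero v hmul hadd x = r ↔ x ≠ 0 ∧ v x = r := by
  by_cases hx : x = 0
  · simp [hx, ofNeZero]
  · simp [ofNeZero_apply_of_ne_zero v hmul hadd hx, hx]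

end Construction

theorem map_natCast_nonneg {R Γ₀ : Type*} [Ring R] [LinearOrderedAddCommMonoidWithTop Γ₀]
    (w : AddValuation R Γ₀) (n : ℕ) : 0 ≤ w n := by
  induction n with
  | zero => simp
  | succ n ih =>
    rw [Nat.cast_succ]
    exact (le_min ih w.map_one.ge).trans (w.map_add _ _)

section NewtonPolygon

variable {R : Type*} [CommRing R] (w : AddValuation R (WithTop ℝ)) {p : ℕ}

theorem one_le_map_choose (hp : p.Prime) (hwp : w p = 1) {m : ℕ} (hm₀ : m ≠ 0) (hmp : m < p) :
    1 ≤ w (p.choose m) := by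
  obtain ⟨k, hk⟩ := hp.dvd_choose_self hm₀ hmp
  rw [hk, Nat.cast_mul, map_mul, hwp]
  exact le_add_of_nonneg_right (w.map_natCast_nonneg k)

variable (hp : p.Prime) (hwp : w p = 1) {u : R} {t : ℝ} (hu : w u = t)
include hp hwp hu

theorem lt_map_sum_Ico :
    ((min (p * t) (1 + t) : ℝ) : WithTop ℝ) < w (∑ m ∈ Ico 2 p, u ^ m * (p.choose m : R)) := by
  refine w.map_lt_sum WithTop.coe_ne_top fun m hm => ?_
  obtain ⟨h2m, hmp⟩ := mem_Ico.1 hm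
  have h2m' : (2 : ℝ) ≤ m := by exact_mod_cast h2m
  have hmp' : (m : ℝ) ≤ p := by exact_mod_cast hmp.le
  have hlt : min (p * t) (1 + t) < 1 + m * t := by
    rcases le_or_gt t 0 with ht | ht
    · exact (min_le_left _ _).trans_lt (by nlinarith)
    · exact (min_le_right _ _).trans_lt (by nlinarith)
  calc ((min (p * t) (1 + t) : ℝ) : WithTop ℝ) < ((m * t + 1 : ℝ) : WithTop ℝ) :=
        WithTop.coe_lt_coe.2 (by linarith)
    _ = m • w u + 1 := by rw [hu, ← WithTop.coe_nsmul, nsmul_eq_mul]; rfl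
    _ ≤ w (u ^ m) + w (p.choose m) := by
        rw [w.map_pow]; gcongr; exact w.one_le_map_choose hp hwp (by omega) hmp
    _ = w (u ^ m * p.choose m) := (w.map_mul _ _).symm

omit hp in
theorem map_natCast_mul_eq_and_map_pow_eq :
    w (p * u) = ((1 + t : ℝ) : WithTop ℝ) ∧ w (u ^ p) = ((p * t : ℝ) : WithTop ℝ) := by
  rw [map_mul, map_pow, hwp, hu, ← WithTop.coe_nsmul, nsmul_eq_mul]
  exact ⟨rfl, rfl⟩

theorem min_le_map_one_add_pow_sub_one :
    ((min (p * t) (1 + t) : ℝ) : WithTop ℝ) ≤ w ((1 + u) ^ p - 1) := by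
  obtain ⟨h₁, h₂⟩ := w.map_natCast_mul_eq_and_map_pow_eq hwp hu
  rw [one_add_pow_sub_one_eq u hp.two_le]
  refine le_min ?_ (w.lt_map_sum_Ico hp hwp hu).le |>.trans (w.map_add _ _)
  refine le_trans ?_ (w.map_add _ _)
  rw [h₁, h₂, min_comm, WithTop.coe_min]

theorem map_one_add_pow_sub_one_of_ne (ht : p * t ≠ 1 + t) :
    w ((1 + u) ^ p - 1) = ((min (p * t) (1 + t) : ℝ) : WithTop ℝ) := by
  obtain ⟨h₁, h₂⟩ := w.map_natCast_mul_eq_and_map_pow_eq hwp hu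
  have hmin : w (p * u + u ^ p) = ((min (p * t) (1 + t) : ℝ) : WithTop ℝ) := by
    rw [w.map_add_of_distinct_val (by rw [h₁, h₂]; exact_mod_cast ht.symm), h₁, h₂, min_comm,
      WithTop.coe_min]
  rw [one_add_pow_sub_one_eq u hp.two_le, w.map_add_eq_of_lt_left, hmin]
  exact hmin ▸ w.lt_map_sum_Ico hp hwp hu

end NewtonPolygon

section Field

variable {K : Type*} [Field K] (w : AddValuation K (WithTop ℝ)) {p : ℕ} (hp : p.Prime)
  (hwp : w p = 1)
include hp hwp

theorem map_eq_of_one_add_pow_eq_one {u : K} (hu₀ : u ≠ 0) (h : (1 + u) ^ p = 1) :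
    w u = ((1 / (p - 1) : ℝ) : WithTop ℝ) := by
  obtain ⟨t, ht⟩ := WithTop.ne_top_iff_exists.1 (w.ne_top_iff.2 hu₀)
  have hpt : p * t = 1 + t := by
    by_contra hne
    have := w.map_one_add_pow_sub_one_of_ne hp hwp ht.symm hne
    rw [h, sub_self, map_zero] at this
    exact WithTop.top_ne_coe this
  have hp1 : (1 : ℝ) < p := by exact_mod_cast hp.one_lt
  rw [← ht, WithTop.coe_eq_coe, eq_div_iff (by linarith)]
  linarith

theorem map_eq_of_map_one_add_pow_sub_one {u : K} {ρ : ℝ} (h : w ((1 + u) ^ p - 1) = ρ)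
    (hρ : ρ ≤ p / (p - 1)) : w u = ((ρ / p : ℝ) : WithTop ℝ) := by
  have hu₀ : u ≠ 0 := by
    rintro rfl
    rw [add_zero, one_pow, sub_self, map_zero] at h
    exact WithTop.top_ne_coe h
  obtain ⟨t, ht⟩ := WithTop.ne_top_iff_exists.1 (w.ne_top_iff.2 hu₀)
  have hp1 : (1 : ℝ) < p := by exact_mod_cast hp.one_lt
  have hρ' : ρ * (p - 1) ≤ p := (le_div_iff₀ (by linarith)).1 hρ
  have hmin : min (p * t) (1 + t) ≤ ρ :=
    WithTop.coe_le_coe.1 (h ▸ w.min_le_map_one_add_pow_sub_one hp hwp ht.symm)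
  have hρt : ρ = p * t := by
    rcases lt_trichotomy (p * t) (1 + t) with hlt | heq | hgt
    · have := w.map_one_add_pow_sub_one_of_ne hp hwp ht.symm hlt.ne
      rw [h, min_eq_left hlt.le] at this
      exact_mod_cast this
    · rw [min_eq_left heq.le] at hmin
      nlinarith
    · have := w.map_one_add_pow_sub_one_of_ne hp hwp ht.symm hgt.ne'
      rw [h, min_eq_right hgt.le] at this
      have : ρ = 1 + t := by exact_mod_cast this
      nlinarith
  rw [← ht, hρt, mul_div_cancel_left₀ _ (by positivity)]

variable {x y : K} {η : ℝ} (hy : w y = η)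
include hy

theorem map_sub_eq_of_pow_eq_pow (hxy : x ≠ y) (h : x ^ p = y ^ p) :
    w (x - y) = ((η + 1 / (p - 1) : ℝ) : WithTop ℝ) := by
  have hy₀ : y ≠ 0 := w.ne_top_iff.1 (hy ▸ WithTop.coe_ne_top)
  have hu₀ : x / y - 1 ≠ 0 := by
    rwa [sub_ne_zero, ne_eq, div_eq_one_iff_eq hy₀]
  have hu : (1 + (x / y - 1)) ^ p = 1 := by
    rw [add_sub_cancel, div_pow, h, div_self (pow_ne_zero _ hy₀)]
  rw [show x - y = y * (x / y - 1) by field_simp, map_mul, hy,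
    w.map_eq_of_one_add_pow_eq_one hp hwp hu₀ hu, WithTop.coe_add]

theorem map_sub_eq_of_map_pow_sub_pow {r : ℝ} (h : w (x ^ p - y ^ p) = r)
    (hr : r ≤ p * η + p / (p - 1)) : w (x - y) = ((r / p : ℝ) : WithTop ℝ) := by
  have hy₀ : y ≠ 0 := w.ne_top_iff.1 (hy ▸ WithTop.coe_ne_top)
  have hu : w ((1 + (x / y - 1)) ^ p - 1) = ((r - p * η : ℝ) : WithTop ℝ) := by
    rw [add_sub_cancel, div_pow, div_sub_one (pow_ne_zero _ hy₀), map_div, h, map_pow, hy,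
      ← WithTop.coe_nsmul, nsmul_eq_mul, WithTop.LinearOrderedAddCommGroup.coe_sub]
  have hp0 : (p : ℝ) ≠ 0 := by exact_mod_cast hp.ne_zero
  rw [show x - y = y * (x / y - 1) by field_simp, map_mul, hy,
    w.map_eq_of_map_one_add_pow_sub_one hp hwp hu (by linarith), ← WithTop.coe_add]
  congr 1
  field_simp
  ring

end Field

end AddValuation

theorem div_add_one_div_sub_one_div_pow_le {p γ : ℝ} (hp : 1 < p) (hγ : -p / (p - 1) < γ)
    (k : ℕ) : (γ / p + 1 / (p - 1)) / p ^ k ≤ p * (γ / p) + p / (p - 1) := by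
  have hp₁ : 0 < p - 1 := sub_pos.2 hp
  have hγ' : 0 < γ * (p - 1) + p := by
    have := (div_lt_iff₀ hp₁).1 hγ
    linarith
  have h₁ : γ / p + 1 / (p - 1) = (γ * (p - 1) + p) / (p * (p - 1)) := by
    field_simp
  have h₂ : p * (γ / p) + p / (p - 1) - (γ / p + 1 / (p - 1)) = (γ * (p - 1) + p) / p := by
    field_simp
  have h₃ : 0 ≤ (γ * (p - 1) + p) / p := by positivity
  refine (div_le_self ?_ (one_le_pow₀ hp.le)).trans (by linarith)
  rw [h₁]
  positivity

theorem Function.iterate_apply_eq_of_apply_succ {X : Type*} {f : X → X} {x : ℕ → X}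
    (h : ∀ n, f (x (n + 1)) = x n) (n : ℕ) : f^[n] (x n) = x 0 := by
  induction n with
  | zero => rfl
  | succ n ih => rw [Function.iterate_succ_apply, h, ih]

/-- Let `p` be prime, `L` a (characteristic-zero) field with an additive
real-valued valuation `v` normalized by `v p = 1` (extending the valuation of a
finite extension `K` of `ℚ_p`), `c` with `-p/(p-1) < v c < 0`, and
`f z = z ^ p - c`.  Suppose every iterated preimage `α` of `a` satisfies
`v α = v c / p`.  If `(αₙ)`, `(βₙ)` are preimage sequences of `a` with
`β 1 ≠ α 1`, then `v (β n - α n) = (v c / p + 1/(p-1)) / p ^ (n-1)` for `n ≥ 1`. -/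
theorem slightly_negative_valuation_differences
    {L : Type*} [Field L] [CharZero L] (v : L → ℝ)
    (hmul : ∀ x y : L, x ≠ 0 → y ≠ 0 → v (x * y) = v x + v y)
    (hadd : ∀ x y : L, x ≠ 0 → y ≠ 0 → x + y ≠ 0 → min (v x) (v y) ≤ v (x + y))
    (p : ℕ) (hp : p.Prime) (hvp : v (p : L) = 1)
    (c a : L) (hc : c ≠ 0)
    (hvc₁ : -(p : ℝ) / (p - 1) < v c) (hvc₂ : v c < 0)
    (hpre : ∀ n : ℕ, 1 ≤ n → ∀ z : L, (fun w : L => w ^ p - c)^[n] z = a →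
      v z = v c / p)
    (α β : ℕ → L) (hα0 : α 0 = a) (hβ0 : β 0 = a)
    (hαrec : ∀ n, (α (n + 1)) ^ p - c = α n)
    (hβrec : ∀ n, (β (n + 1)) ^ p - c = β n)
    (hne : β 1 ≠ α 1) :
    ∀ n, 1 ≤ n → v (β n - α n) = (v c / p + 1 / (p - 1 : ℝ)) / p ^ (n - 1) := by
  set w := AddValuation.ofNeZero v hmul hadd
  have hp₁ : (1 : ℝ) < p := by exact_mod_cast hp.one_lt
  have hwp : w p = 1 := by
    rw [AddValuation.ofNeZero_apply_of_ne_zero v hmul hadd (by exact_mod_cast hp.ne_zero), hvp]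
    rfl
  have hwα : ∀ n, 1 ≤ n → α n ≠ 0 → w (α n) = ((v c / p : ℝ) : WithTop ℝ) := fun n hn hα₀ =>
    (AddValuation.ofNeZero_eq_coe_iff v hmul hadd).2
      ⟨hα₀, hpre n hn _ (hα0 ▸ Function.iterate_apply_eq_of_apply_succ hαrec n)⟩
  have hδ : ∀ n, β (n + 1) ^ p - α (n + 1) ^ p = β n - α n := fun n => by
    rw [← hαrec n, ← hβrec n]; ring
  have hα₁ : α 1 ≠ 0 := by
    intro h₀
    have h := hδ 0
    rw [h₀, hα0, hβ0, sub_self, zero_pow hp.ne_zero, sub_zero, pow_eq_zero_iff hp.ne_zero] at h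
    exact hne (h.trans h₀.symm)
  have hα₂ : ∀ n, 1 ≤ n → α (n + 1) ≠ 0 := by
    intro n hn h₀
    have hαn : α n = -c := by rw [← hαrec, h₀, zero_pow hp.ne_zero, zero_sub]
    have h := hwα n hn (hαn ▸ neg_ne_zero.2 hc)
    rw [hαn, AddValuation.map_neg, AddValuation.ofNeZero_apply_of_ne_zero v hmul hadd hc,
      WithTop.coe_eq_coe, eq_div_iff (by positivity)] at h
    nlinarith
  set E := v c / p + 1 / (p - 1 : ℝ)
  have key : ∀ n, 1 ≤ n → w (β n - α n) = ((E / p ^ (n - 1) : ℝ) : WithTop ℝ) := by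
    intro n hn
    induction n, hn using Nat.le_induction with
    | base =>
      rw [pow_zero, div_one]
      exact w.map_sub_eq_of_pow_eq_pow hp hwp (hwα 1 le_rfl hα₁) hne
        (sub_eq_zero.1 (by rw [hδ, hα0, hβ0, sub_self]))
    | succ n hn ih =>
      rw [w.map_sub_eq_of_map_pow_sub_pow hp hwp (hwα (n + 1) (by omega) (hα₂ n hn))
        ((hδ n).symm ▸ ih) (div_add_one_div_sub_one_div_pow_le hp₁ hvc₁ _), div_div, ← pow_succ, Nat.sub_add_cancel hn, Nat.add_sub_cancel]
  exact fun n hn => ((AddValuation.ofNeZero_eq_coe_iff v hmul hadd).1 (key n hn)).2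
end

section
/- Let K be a field complete with respect to a discrete valuation with residue field k of characteristic p, let ℓ ≥ 2 with p ∤ ℓ, c ∈ K^× and a ∈ K both with nonnegative valuation, and let f(z) = z^ℓ - c. If the residue class of a is not in the forward orbit of the residue class of 0 under the reduction of f mod the maximal ideal, then every iterated preimage of a is a unit, and the extension K(⋃ₙ f^{-n}(a))/K is unramified. -/
/-!
On the closed unit ball `z ↦ z ^ ℓ - c` is `1`-Lipschitz, because `x ^ ℓ - y ^ ℓ` is `x - y` times
an integral element. Preimages of `a` are integral, and a preimage `z` with `v z > 0` would give
`v (f^[n] 0 - a) ≥ v z > 0`; hence every preimage is a unit.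

The field generated by the preimages is a union of towers in which each step adjoins either a
primitive `q`-th root of unity `ζ` or a `q`-th root `θ` of a unit, for primes `q ∣ ℓ`, so that
`v q = 0`. Write an element of the new field as `R θ` and put `w k = v (R (ζ ^ k * θ))`. For every
finite `T`, `min_k ∑_{j ∈ T} w (k + j)` is the minimum of `v` over the points `ζ ^ k * θ` of a
polynomial over the old field, and discrete Fourier inversion (valid as `q` is a unit) identifies
that minimum with the least valuation of a coefficient, a value of `K`. For `T = {j | w j < w 0}`
and for `insert 0 T` the minimum is attained at `k = 0`, so `w 0` is a difference of two values
of `K`. Adjoining `ζ` is handled in the same way, with `(ZMod q)ˣ` acting on exponents.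
-/

open Polynomial IntermediateField Finset Function

section Window

variable {ι κ α : Type*} [LinearOrderedAddCommMonoidWithTop α] (w : ι → α)

theorem Finset.sum_le_sum_of_forall_le_of_card_eq {T T' : Finset ι}
    (hT : ∀ i ∈ T, ∀ i' ∉ T, w i ≤ w i') (hcard : T'.card = T.card) :
    ∑ i ∈ T, w i ≤ ∑ i ∈ T', w i := by
  classical
  obtain ⟨m, hle, hge⟩ : ∃ m, (∀ i ∈ T \ T', w i ≤ m) ∧ ∀ i' ∈ T' \ T, m ≤ w i' := by
    rcases (T \ T').eq_empty_or_nonempty with h | ⟨i₀, hi₀⟩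
    · have h' : T' \ T = ∅ := by
        rw [← card_eq_zero, ← card_sdiff_comm hcard.symm, h, card_empty]
      exact ⟨⊤, fun _ _ => le_top, by simp [h']⟩
    · obtain ⟨i, hi, hmax⟩ := (T \ T').exists_max_image w ⟨i₀, hi₀⟩
      exact ⟨w i, hmax, fun i' hi' => hT i (mem_sdiff.1 hi).1 i' (mem_sdiff.1 hi').2⟩
  rw [← sum_inter_add_sum_sdiff T T', ← sum_inter_add_sum_sdiff T' T, inter_comm]
  refine add_le_add_right ?_ _
  calc ∑ i ∈ T \ T', w i ≤ (T \ T').card • m := sum_le_card_nsmul _ _ _ hle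
    _ = (T' \ T).card • m := by rw [card_sdiff_comm hcard.symm]
    _ ≤ ∑ i ∈ T' \ T, w i := card_nsmul_le_sum _ _ _ hge

theorem Finset.inf_sum_comp_eq_sum [Fintype κ] {σ : κ → ι → ι} (hσ : ∀ k, Injective (σ k))
    {e : κ} (he : σ e = id) {T : Finset ι} (hT : ∀ i ∈ T, ∀ i' ∉ T, w i ≤ w i') :
    univ.inf (fun k => ∑ i ∈ T, w (σ k i)) = ∑ i ∈ T, w i := by
  classical
  refine le_antisymm (by simpa [he] using inf_le (f := fun k => ∑ i ∈ T, w (σ k i)) (mem_univ e))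
    (Finset.le_inf fun k _ => ?_)
  rw [← sum_image fun a _ b _ hab => hσ k hab]
  exact sum_le_sum_of_forall_le_of_card_eq w hT (card_image_of_injective _ (hσ k))

end Window

theorem WithTop.mem_of_inf_sum_mem {ι κ Γ : Type*} [Fintype ι] [Fintype κ] [AddCancelCommMonoid Γ]
    [LinearOrder Γ] [IsOrderedAddMonoid Γ] {G : Set (WithTop Γ)}
    (hG : ∀ a b, a ∈ G → a + b ∈ G → a ≠ ⊤ → b ∈ G) {σ : κ → ι → ι}
    (hσ : ∀ k, Injective (σ k)) {e : κ} (he : σ e = id) (w : ι → WithTop Γ)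
    (hw : ∀ T : Finset ι, univ.inf (fun k => ∑ i ∈ T, w (σ k i)) ∈ G) (j : ι) : w j ∈ G := by
  classical
  set T := univ.filter fun i => w i < w j
  have hjT : j ∉ T := by simp [T]
  have hT : ∀ i ∈ T, ∀ i' ∉ T, w i ≤ w i' := fun i hi i' hi' => by
    simp only [T, mem_filter, mem_univ, true_and, not_lt] at hi hi'
    exact hi.le.trans hi'
  have hjT' : ∀ i ∈ insert j T, ∀ i' ∉ insert j T, w i ≤ w i' := fun i hi i' hi' => by
    simp only [T, mem_insert, mem_filter, mem_univ, true_and, not_or, not_lt] at hi hi'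
    rcases hi with rfl | hi
    exacts [hi'.2, hi.le.trans hi'.2]
  have hsum := hw T
  have hsum' := hw (insert j T)
  rw [inf_sum_comp_eq_sum w hσ he hT] at hsum
  rw [inf_sum_comp_eq_sum w hσ he hjT', sum_insert hjT, add_comm] at hsum'
  by_cases hj : w j = ⊤
  · rwa [hj, add_top, ← hj] at hsum'
  refine hG _ _ hsum hsum' (WithTop.sum_ne_top.2 fun i hi => ?_)
  exact ((mem_filter.1 hi).2.trans_le le_top).ne

theorem IsPrimitiveRoot.sum_pow_mul_eq_ite {L : Type*} [CommRing L] [IsDomain L] {ζ : L} {q : ℕ}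
    (hζ : IsPrimitiveRoot ζ q) (m : ℕ) :
    ∑ k ∈ range q, ζ ^ (m * k) = if q ∣ m then (q : L) else 0 := by
  simp_rw [pow_mul]
  split_ifs with h
  · simp [(hζ.pow_eq_one_iff_dvd m).2 h]
  · have hm : ζ ^ m - 1 ≠ 0 := sub_ne_zero.2 fun h' => h ((hζ.pow_eq_one_iff_dvd m).1 h')
    refine (mul_eq_zero.1 ?_).resolve_right hm
    rw [geom_sum_mul, ← pow_mul, mul_comm, pow_mul, hζ.pow_eq_one, one_pow, sub_self]

theorem IntermediateField.exists_aeval_eq_of_mem_adjoin_simple {F E : Type*} [Field F] [Field E]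
    [Algebra F E] {θ z : E} (hθ : IsIntegral F θ) (hz : z ∈ F⟮θ⟯) : ∃ R : F[X], aeval θ R = z := by
  rwa [← mem_toSubalgebra, adjoin_simple_toSubalgebra_of_isAlgebraic hθ.isAlgebraic,
    Algebra.adjoin_singleton_eq_range_aeval] at hz

namespace AddValuation

section CommRing

variable {R Γ₀ : Type*} [CommRing R] [LinearOrderedAddCommMonoidWithTop Γ₀] (v : AddValuation R Γ₀)

theorem natCast_nonneg (n : ℕ) : 0 ≤ v n := by
  induction n with
  | zero => simp
  | succ n ih => exact (le_min ih v.map_one.ge).trans (by simpa using v.map_add (n : R) 1)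

theorem map_prod {ι : Type*} (s : Finset ι) (f : ι → R) :
    v (∏ i ∈ s, f i) = ∑ i ∈ s, v (f i) := by
  classical
  induction s using Finset.induction_on with
  | empty => simp
  | insert i s hi ih => rw [prod_insert hi, sum_insert hi, v.map_mul, ih]

variable {ℓ : ℕ} {c : R}

theorem nonneg_of_nonneg_pow_sub (hℓ : ℓ ≠ 0) (hc : 0 ≤ v c) {x : R} (hx : 0 ≤ v (x ^ ℓ - c)) :
    0 ≤ v x := by
  rw [← nsmul_nonneg_iff hℓ, ← v.map_pow]
  simpa using (le_min hx hc).trans (v.map_add (x ^ ℓ - c) c)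

theorem nonneg_pow_sub (hc : 0 ≤ v c) {x : R} (hx : 0 ≤ v x) : 0 ≤ v (x ^ ℓ - c) :=
  (le_min (v.map_pow x ℓ ▸ nsmul_nonneg hx ℓ) hc).trans (v.map_sub _ _)

theorem nonneg_of_nonneg_iterate (hℓ : ℓ ≠ 0) (hc : 0 ≤ v c) (n : ℕ) {x : R}
    (hx : 0 ≤ v ((fun z => z ^ ℓ - c)^[n] x)) : 0 ≤ v x := by
  induction n generalizing x with
  | zero => exact hx
  | succ n ih => exact v.nonneg_of_nonneg_pow_sub hℓ hc (ih (x := x ^ ℓ - c) hx)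

theorem map_sub_le_map_pow_sub_pow {x y : R} (hx : 0 ≤ v x) (hy : 0 ≤ v y) :
    v (x - y) ≤ v (x ^ ℓ - y ^ ℓ) := by
  rw [← geom_sum₂_mul, v.map_mul]
  refine le_add_of_nonneg_left (v.map_le_sum fun i _ => ?_)
  rw [v.map_mul, v.map_pow, v.map_pow]
  exact add_nonneg (nsmul_nonneg hx _) (nsmul_nonneg hy _)

theorem map_sub_le_map_iterate_sub (hc : 0 ≤ v c) (n : ℕ) {x y : R} (hx : 0 ≤ v x)
    (hy : 0 ≤ v y) :
    v (x - y) ≤ v ((fun z => z ^ ℓ - c)^[n] x - (fun z => z ^ ℓ - c)^[n] y) := by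
  induction n generalizing x y with
  | zero => exact le_rfl
  | succ n ih =>
    refine (v.map_sub_le_map_pow_sub_pow (ℓ := ℓ) hx hy).trans ?_
    simpa using ih (v.nonneg_pow_sub hc hx) (v.nonneg_pow_sub hc hy)

theorem map_eq_zero_of_iterate_eq (hℓ : ℓ ≠ 0) (hc : 0 ≤ v c) {a : R} (ha : 0 ≤ v a)
    (horbit : ∀ n, 1 ≤ n → ¬ 0 < v ((fun z => z ^ ℓ - c)^[n] 0 - a)) {n : ℕ} (hn : 1 ≤ n)
    {z : R} (hz : (fun z => z ^ ℓ - c)^[n] z = a) : v z = 0 := by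
  have hz0 : 0 ≤ v z := v.nonneg_of_nonneg_iterate hℓ hc n (hz ▸ ha)
  refine hz0.antisymm' (not_lt.1 fun hpos => horbit n hn ?_)
  have := v.map_sub_le_map_iterate_sub (ℓ := ℓ) hc n hz0 (v.map_zero ▸ le_top)
  rw [sub_zero, hz, ← neg_sub, v.map_neg] at this
  exact hpos.trans_le this

end CommRing

section Field

variable {L Γ₀ : Type*} [Field L] [LinearOrderedAddCommMonoidWithTop Γ₀] (v : AddValuation L Γ₀)

theorem map_eq_zero_of_pow_eq_one {n : ℕ} (hn : n ≠ 0) {x : L} (hx : x ^ n = 1) : v x = 0 := by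
  have h : n • v x = 0 := by rw [← v.map_pow, hx, v.map_one]
  exact le_antisymm ((nsmul_nonpos_iff hn).1 h.le) ((nsmul_nonneg_iff hn).1 h.ge)

theorem inf_eval_eq_inf_coeff {q : ℕ} (hq : v q = 0) {ζ θ : L} (hζ : IsPrimitiveRoot ζ q)
    (hθ : v θ = 0) {P : L[X]} (hP : P.natDegree < q) :
    (range q).inf (fun k => v (P.eval (ζ ^ k * θ))) = (range q).inf (fun i => v (P.coeff i)) := by
  have hterm {x : L} (hx : v x = 0) (i : ℕ) : v (P.coeff i * x ^ i) = v (P.coeff i) := by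
    rw [v.map_mul, v.map_pow, hx, nsmul_zero, add_zero]
  have hq0 : q ≠ 0 := by rintro rfl; simp at hP
  have hζθ (k : ℕ) : v (ζ ^ k * θ) = 0 := by
    rw [v.map_mul, v.map_pow, v.map_eq_zero_of_pow_eq_one hq0 hζ.pow_eq_one, hθ, nsmul_zero,
      add_zero]
  refine le_antisymm (Finset.le_inf fun i hi => ?_)
    (Finset.le_inf fun k _ => (eval_eq_sum_range' hP _ ▸ v.map_le_sum fun i hi =>
      (inf_le hi).trans (hterm (hζθ k) i).ge))
  rw [mem_range] at hi
  -- discrete Fourier inversion recovers the `i`-th coefficient from the values at the `ζ ^ k * θ`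
  have hfourier :
      ∑ k ∈ range q, ζ ^ ((q - i) * k) * P.eval (ζ ^ k * θ) = q * (P.coeff i * θ ^ i) := by
    have hmix (j k : ℕ) : ζ ^ ((q - i) * k) * (P.coeff j * (ζ ^ k * θ) ^ j) =
        P.coeff j * θ ^ j * ζ ^ ((q - i + j) * k) := by ring
    simp_rw [eval_eq_sum_range' hP, mul_sum, hmix]
    rw [sum_comm]
    simp_rw [← mul_sum, hζ.sum_pow_mul_eq_ite]
    rw [sum_eq_single_of_mem i (mem_range.2 hi) fun j hj hji => ?_]
    · simp [Nat.sub_add_cancel hi.le, mul_comm]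
    · have : ¬ q ∣ q - i + j := fun hdvd => hji <| by
        have := Nat.eq_of_dvd_of_lt_two_mul (by omega) hdvd (by simp at hj; omega)
        omega
      simp [this]
  calc (range q).inf (fun k => v (P.eval (ζ ^ k * θ)))
      ≤ v (∑ k ∈ range q, ζ ^ ((q - i) * k) * P.eval (ζ ^ k * θ)) := by
        refine v.map_le_sum fun k hk => (inf_le hk).trans ?_
        rw [v.map_mul, v.map_pow, v.map_eq_zero_of_pow_eq_one hq0 hζ.pow_eq_one, nsmul_zero,
          zero_add]
    _ = v (P.coeff i) := by rw [hfourier, v.map_mul, hq, zero_add, hterm hθ]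

end Field

variable {K L Γ : Type*} [Field K] [Field L] [Algebra K L] [AddCancelCommMonoid Γ] [LinearOrder Γ]
  [IsOrderedAddMonoid Γ] (v : AddValuation L (WithTop Γ))

variable (K) in
def baseValues : Set (WithTop Γ) := Set.range fun x : K => v (algebraMap K L x)

def NoNewValues (M : IntermediateField K L) : Prop := ∀ z ∈ M, v z ∈ v.baseValues K

theorem mem_baseValues_of_add_mem {a b : WithTop Γ} (ha : a ∈ v.baseValues K)
    (hab : a + b ∈ v.baseValues K) (ha' : a ≠ ⊤) : b ∈ v.baseValues K := by
  obtain ⟨x, rfl⟩ := ha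
  obtain ⟨y, hy⟩ := hab
  have hx : algebraMap K L x ≠ 0 := (v.ne_top_iff).1 ha'
  refine ⟨y * x⁻¹, ?_⟩
  simp only at hy ⊢
  rw [_root_.map_mul, map_inv₀, v.map_mul, hy, add_right_comm, ← v.map_mul, mul_inv_cancel₀ hx,
    v.map_one, zero_add]

theorem noNewValues_bot : v.NoNewValues (⊥ : IntermediateField K L) := by
  rintro _ ⟨x, rfl⟩
  exact ⟨x, rfl⟩

theorem inf_aeval_mem_baseValues {M : IntermediateField K L} (hM : v.NoNewValues M) {q : ℕ}
    (hq : v q = 0) {ζ θ : L} (hζ : IsPrimitiveRoot ζ q) (hθ : v θ = 0) (hθM : θ ^ q ∈ M)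
    (S : M[X]) : (range q).inf (fun k => v (aeval (ζ ^ k * θ) S)) ∈ v.baseValues K := by
  have hq0 : q ≠ 0 := by rintro rfl; simp at hq
  set D : M[X] := X ^ q - C ⟨θ ^ q, hθM⟩
  have hD : D.Monic := monic_X_pow_sub_C _ hq0
  have hroot (k : ℕ) : aeval (ζ ^ k * θ) D = 0 := by
    have hζk : (ζ ^ k) ^ q = 1 := by rw [← pow_mul, mul_comm, pow_mul, hζ.pow_eq_one, one_pow]
    simp [D, mul_pow, hζk]
  set S' := (S %ₘ D).map (algebraMap M L)
  have hD1 : D ≠ 1 := fun h => hq0 (by simpa [D] using congrArg natDegree h)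
  have hS' : S'.natDegree < q :=
    natDegree_map_le.trans_lt (by simpa [D] using natDegree_modByMonic_lt S hD hD1)
  have heval (k : ℕ) : aeval (ζ ^ k * θ) S = S'.eval (ζ ^ k * θ) := by
    rw [eval_map_algebraMap, aeval_modByMonic_eq_self_of_root (hroot k)]
  simp_rw [heval, v.inf_eval_eq_inf_coeff hq hζ hθ hS']
  obtain ⟨i, -, hi⟩ := exists_mem_eq_inf (range q) (nonempty_range_iff.2 hq0)
    fun i => v (S'.coeff i)
  rw [hi, coeff_map]
  exact hM _ (SetLike.coe_mem _)

theorem aeval_mem_baseValues_of_orbit {ι : Type*} [Fintype ι] {M : IntermediateField K L}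
    {y : ι → L} {σ : ι → ι → ι} (hσ : ∀ k, Injective (σ k)) {e : ι} (he : σ e = id)
    {P : ι → M[X]} (hP : ∀ k j, aeval (y k) (P j) = y (σ k j))
    (hinf : ∀ S : M[X], univ.inf (fun k => v (aeval (y k) S)) ∈ v.baseValues K) (R : M[X])
    (j : ι) : v (aeval (y j) R) ∈ v.baseValues K := by
  refine WithTop.mem_of_inf_sum_mem (fun a b => v.mem_baseValues_of_add_mem) hσ he
    (fun j => v (aeval (y j) R)) (fun T => ?_) j
  convert hinf (∏ j ∈ T, R.comp (P j)) using 3 with k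
  simp [v.map_prod, aeval_comp, hP]

theorem noNewValues_sup_adjoin_of_pow_mem {M : IntermediateField K L} (hM : v.NoNewValues M)
    {q : ℕ} (hq : v q = 0) {ζ θ : L} (hζ : IsPrimitiveRoot ζ q) (hζM : ζ ∈ M) (hθ : v θ = 0)
    (hθM : θ ^ q ∈ M) : v.NoNewValues (M ⊔ K⟮θ⟯) := by
  have hq0 : q ≠ 0 := by rintro rfl; simp at hq
  have : NeZero q := ⟨hq0⟩
  intro z hz
  rw [← restrictScalars_adjoin_eq_sup, mem_restrictScalars] at hz
  have hθint : IsIntegral M θ :=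
    .of_pow hq0.bot_lt (isIntegral_algebraMap (x := (⟨θ ^ q, hθM⟩ : M)))
  obtain ⟨R, rfl⟩ := exists_aeval_eq_of_mem_adjoin_simple hθint hz
  have hmod (n : ℕ) : ζ ^ (n % q) = ζ ^ n := by rw [hζ.eq_orderOf, pow_mod_orderOf]
  have := v.aeval_mem_baseValues_of_orbit (y := fun k : Fin q => ζ ^ (k : ℕ) * θ)
    (σ := fun k j => k + j) (fun k => add_right_injective k) (funext zero_add)
    (P := fun j => C ⟨ζ ^ (j : ℕ), pow_mem hζM _⟩ * X) (fun k j => ?_) (fun S => ?_) R 0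
  · simpa using this
  · simp only [_root_.map_mul, aeval_C, aeval_X, IntermediateField.algebraMap_apply, Fin.val_add,
      hmod, pow_add]
    ring
  · have := v.inf_aeval_mem_baseValues hM hq hζ hθ hθM S
    rwa [← Nat.Iio_eq_range, ← Fin.map_valEmbedding_univ, inf_map] at this

theorem noNewValues_sup_adjoin_primitiveRoot {M : IntermediateField K L} (hM : v.NoNewValues M)
    {q : ℕ} (hq : q.Prime) (hqv : v q = 0) {ζ : L} (hζ : IsPrimitiveRoot ζ q) :
    v.NoNewValues (M ⊔ K⟮ζ⟯) := by
  have : Fact q.Prime := ⟨hq⟩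
  have : Fact (1 < q) := ⟨hq.one_lt⟩
  intro z hz
  rw [← restrictScalars_adjoin_eq_sup, mem_restrictScalars] at hz
  obtain ⟨R, rfl⟩ := exists_aeval_eq_of_mem_adjoin_simple
    ((hζ.isIntegral hq.pos).tower_top (A := M)) hz
  have hmod (n : ℕ) : ζ ^ (n % q) = ζ ^ n := by rw [hζ.eq_orderOf, pow_mod_orderOf]
  -- `B` vanishes at `1`, the `q`-th root of unity outside the orbit, and is a unit at the others
  set B : M[X] := ∑ i ∈ range q, X ^ i - (q : M[X])
  have hB (m : ℕ) : aeval (ζ ^ m) B = if q ∣ m then 0 else -(q : L) := by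
    simp only [B, _root_.map_sub, map_sum, _root_.map_pow, aeval_X, map_natCast, ← pow_mul,
      hζ.sum_pow_mul_eq_ite]
    split_ifs <;> simp
  have hunit (k : (ZMod q)ˣ) : ¬ q ∣ (k : ZMod q).val := fun h =>
    k.ne_zero ((ZMod.val_eq_zero _).1 (Nat.eq_zero_of_dvd_of_lt h (ZMod.val_lt _)))
  have hBS (S : M[X]) (k : (ZMod q)ˣ) :
      v (aeval (ζ ^ (k : ZMod q).val) (B * S)) = v (aeval (ζ ^ (k : ZMod q).val) S) := by
    rw [_root_.map_mul, v.map_mul, hB, if_neg (hunit k), v.map_neg, hqv, zero_add]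
  have := v.aeval_mem_baseValues_of_orbit (y := fun k : (ZMod q)ˣ => ζ ^ (k : ZMod q).val)
    (σ := fun k j => k * j) (fun k => mul_right_injective k) (funext one_mul)
    (P := fun j => X ^ (j : ZMod q).val) (fun k j => ?_) (fun S => ?_) R 1
  · simpa [ZMod.val_one] using this
  · simp [← pow_mul, ZMod.val_mul, hmod]
  · convert v.inf_aeval_mem_baseValues hM hqv hζ v.map_one (by simp) (B * S) using 1
    simp only [mul_one]
    refine le_antisymm (Finset.le_inf fun m hm => ?_) (Finset.le_inf fun k _ => ?_)
    · rw [mem_range] at hm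
      rcases eq_or_ne m 0 with rfl | hm0
      · have hB1 : aeval (1 : L) B = 0 := by simpa using hB 0
        simp [hB1]
      · set k := Units.mk0 (m : ZMod q) (by
          rw [Ne, ZMod.natCast_eq_zero_iff]
          exact fun h => hm0 (Nat.eq_zero_of_dvd_of_lt h hm))
        have hk : (k : ZMod q).val = m := ZMod.val_cast_of_lt hm
        exact (Finset.inf_le (mem_univ k)).trans_eq (by rw [← hBS, hk])
    · rw [← hBS]
      exact Finset.inf_le (mem_range.2 (ZMod.val_lt _))

variable [IsAlgClosed L]

theorem exists_noNewValues_of_pow_prime_mem {M : IntermediateField K L} (hM : v.NoNewValues M)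
    {p : ℕ} (hp : p.Prime) (hpv : v p = 0) {θ : L} (hθ : v θ = 0) (hθM : θ ^ p ∈ M) :
    ∃ M' : IntermediateField K L, M ≤ M' ∧ v.NoNewValues M' ∧ θ ∈ M' := by
  have : NeZero (p : L) := ⟨fun h => by simp [h] at hpv⟩
  obtain ⟨ζ, hζ⟩ := HasEnoughRootsOfUnity.exists_primitiveRoot L p
  have hM₁ := v.noNewValues_sup_adjoin_primitiveRoot hM hp hpv hζ
  have hζM₁ : ζ ∈ M ⊔ K⟮ζ⟯ := (le_sup_right : K⟮ζ⟯ ≤ _) (mem_adjoin_simple_self K ζ)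
  refine ⟨M ⊔ K⟮ζ⟯ ⊔ K⟮θ⟯, le_sup_left.trans le_sup_left, ?_,
    (le_sup_right : K⟮θ⟯ ≤ _) (mem_adjoin_simple_self K θ)⟩
  exact v.noNewValues_sup_adjoin_of_pow_mem hM₁ hpv hζ hζM₁ hθ (le_sup_left (a := M) hθM)

theorem exists_noNewValues_of_pow_mem {n : ℕ} (hn : v n = 0) {M : IntermediateField K L}
    (hM : v.NoNewValues M) {θ : L} (hθ : v θ = 0) (hθM : θ ^ n ∈ M) :
    ∃ M' : IntermediateField K L, M ≤ M' ∧ v.NoNewValues M' ∧ θ ∈ M' := by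
  induction n using Nat.recOnMul generalizing M θ with
  | zero => simp at hn
  | one => exact ⟨M, le_rfl, hM, by simpa using hθM⟩
  | prime p hp => exact v.exists_noNewValues_of_pow_prime_mem hM hp hn hθ hθM
  | mul a b iha ihb =>
    rw [Nat.cast_mul, v.map_mul,
      add_eq_zero_iff_of_nonneg (v.natCast_nonneg a) (v.natCast_nonneg b)] at hn
    obtain ⟨M₁, hMM₁, hM₁, hθa⟩ := ihb hn.2 hM (θ := θ ^ a) (by simp [v.map_pow, hθ])
      (by rwa [← pow_mul])
    obtain ⟨M₂, hM₁M₂, hM₂, hθM₂⟩ := iha hn.1 hM₁ hθ hθa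
    exact ⟨M₂, hMM₁.trans hM₁M₂, hM₂, hθM₂⟩

variable {ℓ : ℕ} (hℓ : v ℓ = 0) {f : L → L} {c a : K}
  (hf : ∀ z, f z = z ^ ℓ - algebraMap K L c)
  (hunit : ∀ n, 1 ≤ n → ∀ z, f^[n] z = algebraMap K L a → v z = 0)
include hℓ hf hunit

theorem exists_noNewValues_of_iterate_eq {n : ℕ} {w : L} (hw : f^[n] w = algebraMap K L a)
    {M : IntermediateField K L} (hM : v.NoNewValues M) :
    ∃ M' : IntermediateField K L, M ≤ M' ∧ v.NoNewValues M' ∧ w ∈ M' := by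
  induction n generalizing w with
  | zero =>
    rw [iterate_zero_apply] at hw
    exact ⟨M, le_rfl, hM, hw ▸ M.algebraMap_mem a⟩
  | succ n ih =>
    obtain ⟨M₁, hMM₁, hM₁, hfw⟩ := ih (by rwa [iterate_succ_apply] at hw)
    have hwM₁ : w ^ ℓ ∈ M₁ := by
      simpa [hf] using add_mem hfw (M₁.algebraMap_mem c)
    obtain ⟨M₂, hM₁M₂, hM₂, hwM₂⟩ :=
      v.exists_noNewValues_of_pow_mem hℓ hM₁ (hunit (n + 1) (by omega) w hw) hwM₁
    exact ⟨M₂, hMM₁.trans hM₁M₂, hM₂, hwM₂⟩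

theorem noNewValues_adjoin_iterate_preimage :
    v.NoNewValues (adjoin K {w | ∃ n, f^[n] w = algebraMap K L a}) := by
  have hfinite (T : Finset L) (hT : ↑T ⊆ {w | ∃ n, f^[n] w = algebraMap K L a}) :
      ∃ M : IntermediateField K L, v.NoNewValues M ∧ ↑T ⊆ (M : Set L) := by
    classical
    induction T using Finset.induction_on with
    | empty => exact ⟨⊥, v.noNewValues_bot, by simp⟩
    | insert w T _ ih =>
      rw [coe_insert, Set.insert_subset_iff] at hT
      obtain ⟨M, hM, hTM⟩ := ih hT.2
      obtain ⟨n, hn⟩ := hT.1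
      obtain ⟨M', hMM', hM', hwM'⟩ := v.exists_noNewValues_of_iterate_eq hℓ hf hunit hn hM
      exact ⟨M', hM', by simpa [Set.insert_subset_iff] using ⟨hwM', hTM.trans hMM'⟩⟩
  intro z hz
  obtain ⟨T, hT, hzT⟩ := exists_finset_of_mem_adjoin hz
  obtain ⟨M, hM, hTM⟩ := hfinite T hT
  exact hM z (adjoin_le_iff.2 hTM hzT)

end AddValuation

theorem tame_unramified_general
    {K L : Type*} [Field K] [Field L] [Algebra K L] [IsAlgClosed L]
    (v : L → WithTop ℝ)
    (hv0 : v 0 = ⊤) (hv1 : v 1 = 0)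
    (hmul : ∀ x y : L, v (x * y) = v x + v y)
    (hadd : ∀ x y : L, min (v x) (v y) ≤ v (x + y))
    (ℓ : ℕ) (htame : v ((ℓ : L)) = 0)
    (c a : K)
    (hvc : 0 ≤ v (algebraMap K L c)) (hva : 0 ≤ v (algebraMap K L a))
    (f : L → L) (hf : f = fun z => z ^ ℓ - algebraMap K L c)
    (horbit : ∀ n : ℕ, 1 ≤ n → ¬ (0 < v (f^[n] 0 - algebraMap K L a))) :
    (∀ n : ℕ, 1 ≤ n → ∀ z : L, f^[n] z = algebraMap K L a → v z = 0) ∧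
    (∀ z : L, z ∈ IntermediateField.adjoin K
        {w : L | ∃ n : ℕ, f^[n] w = algebraMap K L a} →
      z ≠ 0 → ∃ x : K, x ≠ 0 ∧ v (algebraMap K L x) = v z) := by
  subst hf
  let val := AddValuation.of v hv0 hv1 hadd hmul
  have hℓ : ℓ ≠ 0 := by rintro rfl; simp [hv0] at htame
  have hunit : ∀ n, 1 ≤ n → ∀ z, (fun z => z ^ ℓ - algebraMap K L c)^[n] z = algebraMap K L a →
      v z = 0 := fun n hn z hz => val.map_eq_zero_of_iterate_eq hℓ hvc hva horbit hn hz
  refine ⟨hunit, fun z hz hz0 => ?_⟩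
  obtain ⟨x, hx⟩ := val.noNewValues_adjoin_iterate_preimage htame (fun _ => rfl) hunit z hz
  refine ⟨x, ?_, hx⟩
  rintro rfl
  exact hz0 (val.top_iff.1 (by simpa [hv0] using hx.symm))

/-- Tame, nonnegative-valuation case.  Let `K` be a field (complete with respect to
a discrete valuation), `L` an algebraically closed extension carrying an additive
valuation `v : L → WithTop ℝ` (extending that of `K`), and `f z = z ^ ℓ - c` with
`ℓ ≥ 2` tame (`v ℓ = 0`, i.e. the residue characteristic does not divide `ℓ`),
`v c ≥ 0`, `v a ≥ 0`.  If the residue class of `a` is not in the forward orbit of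
the residue class of `0` (i.e. `v (f^n(0) - a) ≤ 0` for all `n ≥ 1`), then every
iterated preimage of `a` is a unit, and `K(⋃ₙ f^{-n}(a))/K` is unramified in the
sense that the value group does not grow. -/
theorem tame_unramified
    {K L : Type*} [Field K] [Field L] [Algebra K L] [IsAlgClosed L]
    (v : L → WithTop ℝ)
    (hv0 : v 0 = ⊤) (hv1 : v 1 = 0)
    (hmul : ∀ x y : L, v (x * y) = v x + v y)
    (hadd : ∀ x y : L, min (v x) (v y) ≤ v (x + y))
    (ℓ : ℕ) (hℓ : 2 ≤ ℓ) (htame : v ((ℓ : L)) = 0)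
    (c a : K) (hc : c ≠ 0)
    (hvc : 0 ≤ v (algebraMap K L c)) (hva : 0 ≤ v (algebraMap K L a))
    (f : L → L) (hf : f = fun z => z ^ ℓ - algebraMap K L c)
    (horbit : ∀ n : ℕ, 1 ≤ n → ¬ (0 < v (f^[n] 0 - algebraMap K L a))) :
    (∀ n : ℕ, 1 ≤ n → ∀ z : L, f^[n] z = algebraMap K L a → v z = 0) ∧
    (∀ z : L, z ∈ IntermediateField.adjoin K
        {w : L | ∃ n : ℕ, f^[n] w = algebraMap K L a} →
      z ≠ 0 → ∃ x : K, x ≠ 0 ∧ v (algebraMap K L x) = v z) :=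
  tame_unramified_general v hv0 hv1 hmul hadd ℓ htame c a hvc hva f hf horbit
end
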